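/- Suppose L is C² and there exists r ∈ ℝ with sup over all (m,λ) of λ_max(L_λλ) < r < inf over all (m,λ) of λ_min(L_mm). Then along any trajectory of the gradient descent-ascent dynamics, the Lyapunov function V(m, λ) = ½‖∇_m L‖² + ½‖∇_λ L‖² - r·L(m, λ) is non-increasing; moreover dV/dt ≤ -μ(‖∇_m L‖² + ‖∇_λ L‖²) for some μ > 0. -/

import Mathlib

/-!
Write `g₁ = ∇ₘL`, `g₂ = ∇_λL` and `H` for the Hessian of `L`. Along the flow the velocity is
`(-g₁, g₂)`, so `d/dt (½‖g₁‖² + ½‖g₂‖²) = H(-g₁, g₂)(g₁, 0) + H(-g₁, g₂)(0, g₂)`, in which the mixed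
terms cancel by symmetry of `H`, leaving `-H(g₁,0)(g₁,0) + H(0,g₂)(0,g₂)`; the term `-rL`
contributes `r‖g₁‖² - r‖g₂‖²`. The curvature bounds then give
`dV/dt ≤ -(b - r)‖g₁‖² - (r - a)‖g₂‖²`, so `μ = min (b - r) (r - a)` works.
-/

open RealInnerProductSpace
open InnerProductSpace ContinuousLinearMap

lemma ContDiff.hasFDerivAt_fderiv {E F : Type*} [NormedAddCommGroup E] [NormedSpace ℝ E]
    [NormedAddCommGroup F] [NormedSpace ℝ F] {f : E → F} (hf : ContDiff ℝ 2 f) (x : E) :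
    HasFDerivAt (fderiv ℝ f) (fderiv ℝ (fderiv ℝ f) x) x :=
  ((hf.fderiv_right one_add_one_eq_two.le).differentiable one_ne_zero x).hasFDerivAt

section PartialGradient

variable {E K : Type*} [NormedAddCommGroup E] [InnerProductSpace ℝ E]
  [NormedAddCommGroup K] [InnerProductSpace ℝ K]

/-- `toDual` is only conjugate-linear in general; over `ℝ` its inverse is a continuous linear map,
which lets gradients be differentiated by the chain rule. -/
noncomputable def toDualSymmCLM (E : Type*) [NormedAddCommGroup E] [InnerProductSpace ℝ E]
    [CompleteSpace E] : StrongDual ℝ E →L[ℝ] E :=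
  (toDual ℝ E).symm.toContinuousLinearEquiv.toContinuousLinearMap

noncomputable def fstGradCLM [CompleteSpace E] : (E × K →L[ℝ] ℝ) →L[ℝ] E :=
  toDualSymmCLM E ∘L (compL ℝ E (E × K) ℝ).flip (inl ℝ E K)

noncomputable def sndGradCLM [CompleteSpace K] : (E × K →L[ℝ] ℝ) →L[ℝ] K :=
  toDualSymmCLM K ∘L (compL ℝ K (E × K) ℝ).flip (inr ℝ E K)

@[simp]
lemma inner_fstGradCLM [CompleteSpace E] (φ : E × K →L[ℝ] ℝ) (v : E) :
    ⟪fstGradCLM φ, v⟫ = φ (v, 0) :=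
  toDual_symm_apply

@[simp]
lemma inner_sndGradCLM [CompleteSpace K] (φ : E × K →L[ℝ] ℝ) (v : K) :
    ⟪sndGradCLM φ, v⟫ = φ (0, v) :=
  toDual_symm_apply

noncomputable def fstGradient [CompleteSpace E] (L : E × K → ℝ) (p : E × K) : E :=
  gradient (fun x => L (x, p.2)) p.1

noncomputable def sndGradient [CompleteSpace K] (L : E × K → ℝ) (p : E × K) : K :=
  gradient (fun y => L (p.1, y)) p.2

variable {L : E × K → ℝ}

lemma fstGradient_eq [CompleteSpace E] {p : E × K} (hL : DifferentiableAt ℝ L p) :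
    fstGradient L p = fstGradCLM (fderiv ℝ L p) := by
  have h := hL.hasFDerivAt.comp p.1 (hasFDerivAt_prodMk_left (𝕜 := ℝ) p.1 p.2)
  exact congrArg (toDual ℝ E).symm h.fderiv

lemma sndGradient_eq [CompleteSpace K] {p : E × K} (hL : DifferentiableAt ℝ L p) :
    sndGradient L p = sndGradCLM (fderiv ℝ L p) := by
  have h := hL.hasFDerivAt.comp p.2 (hasFDerivAt_prodMk_right (𝕜 := ℝ) p.1 p.2)
  exact congrArg (toDual ℝ K).symm h.fderiv

lemma hasFDerivAt_fstGradient [CompleteSpace E] (hL : ContDiff ℝ 2 L) (p : E × K) :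
    HasFDerivAt (fstGradient L) (fstGradCLM ∘L fderiv ℝ (fderiv ℝ L) p) p := by
  have hL₁ := hL.differentiable two_ne_zero
  rw [show fstGradient L = fstGradCLM ∘ fderiv ℝ L from funext fun q => fstGradient_eq (hL₁ q)]
  exact fstGradCLM.hasFDerivAt.comp p (hL.hasFDerivAt_fderiv p)

lemma hasFDerivAt_sndGradient [CompleteSpace K] (hL : ContDiff ℝ 2 L) (p : E × K) :
    HasFDerivAt (sndGradient L) (sndGradCLM ∘L fderiv ℝ (fderiv ℝ L) p) p := by
  have hL₁ := hL.differentiable two_ne_zero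
  rw [show sndGradient L = sndGradCLM ∘ fderiv ℝ L from funext fun q => sndGradient_eq (hL₁ q)]
  exact sndGradCLM.hasFDerivAt.comp p (hL.hasFDerivAt_fderiv p)

lemma inner_fderiv_gradient_fst [CompleteSpace E] (hL : ContDiff ℝ 2 L) (m : E) (l : K) (v : E) :
    ⟪v, fderiv ℝ (fun m' => gradient (fun m'' => L (m'', l)) m') m v⟫
      = fderiv ℝ (fderiv ℝ L) (m, l) (v, 0) (v, 0) := by
  have h := (hasFDerivAt_fstGradient hL (m, l)).comp m (hasFDerivAt_prodMk_left (𝕜 := ℝ) m l)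
  rw [show (fun m' => gradient (fun m'' => L (m'', l)) m') = fstGradient L ∘ (·, l) from rfl,
    h.fderiv, real_inner_comm]
  simp

lemma inner_fderiv_gradient_snd [CompleteSpace K] (hL : ContDiff ℝ 2 L) (m : E) (l : K) (v : K) :
    ⟪v, fderiv ℝ (fun l' => gradient (fun l'' => L (m, l'')) l') l v⟫
      = fderiv ℝ (fderiv ℝ L) (m, l) (0, v) (0, v) := by
  have h := (hasFDerivAt_sndGradient hL (m, l)).comp l (hasFDerivAt_prodMk_right (𝕜 := ℝ) m l)
  rw [show (fun l' => gradient (fun l'' => L (m, l'')) l') = sndGradient L ∘ (m, ·) from rfl,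
    h.fderiv, real_inner_comm]
  simp

end PartialGradient

section Lyapunov

variable {E K : Type*} [NormedAddCommGroup E] [InnerProductSpace ℝ E] [CompleteSpace E]
  [NormedAddCommGroup K] [InnerProductSpace ℝ K] [CompleteSpace K] {L : E × K → ℝ}

variable (L) in
noncomputable def gdaLyapunov (r : ℝ) (p : E × K) : ℝ :=
  1 / 2 * ‖fstGradient L p‖ ^ 2 + 1 / 2 * ‖sndGradient L p‖ ^ 2 - r * L p

lemma hasDerivAt_gdaLyapunov_comp (hL : ContDiff ℝ 2 L) (r : ℝ) {p : ℝ → E × K} {w : E × K}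
    {t : ℝ} (hp : HasDerivAt p w t) :
    HasDerivAt (fun s => gdaLyapunov L r (p s))
      (fderiv ℝ (fderiv ℝ L) (p t) w (fstGradient L (p t), 0)
        + fderiv ℝ (fderiv ℝ L) (p t) w (0, sndGradient L (p t))
        - r * fderiv ℝ L (p t) w) t := by
  have h₁ := ((hasFDerivAt_fstGradient hL (p t)).comp_hasDerivAt t hp).norm_sq
  have h₂ := ((hasFDerivAt_sndGradient hL (p t)).comp_hasDerivAt t hp).norm_sq
  have h₀ := ((hL.differentiable two_ne_zero (p t)).hasFDerivAt.comp_hasDerivAt t hp)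
  refine (((h₁.const_mul (1 / 2)).add (h₂.const_mul (1 / 2))).sub (h₀.const_mul r)).congr_deriv ?_
  simp [real_inner_comm _ (fstGradient L (p t)), real_inner_comm _ (sndGradient L (p t))]

lemma hasDerivAt_gdaLyapunov_of_gda (hL : ContDiff ℝ 2 L) (r : ℝ) {p : ℝ → E × K} {t : ℝ}
    (hp : HasDerivAt p (-fstGradient L (p t), sndGradient L (p t)) t) :
    HasDerivAt (fun s => gdaLyapunov L r (p s))
      (fderiv ℝ (fderiv ℝ L) (p t) (0, sndGradient L (p t)) (0, sndGradient L (p t))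
        - fderiv ℝ (fderiv ℝ L) (p t) (fstGradient L (p t), 0) (fstGradient L (p t), 0)
        - r * (‖sndGradient L (p t)‖ ^ 2 - ‖fstGradient L (p t)‖ ^ 2)) t := by
  refine (hasDerivAt_gdaLyapunov_comp hL r hp).congr_deriv ?_
  set x : E × K := (fstGradient L (p t), 0)
  set y : E × K := (0, sndGradient L (p t))
  have hsymm : fderiv ℝ (fderiv ℝ L) (p t) y x = fderiv ℝ (fderiv ℝ L) (p t) x y :=
    hL.contDiffAt.isSymmSndFDerivAt (by simp) y x
  have hL₁ := hL.differentiable two_ne_zero (p t)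
  have hx : fderiv ℝ L (p t) x = ‖fstGradient L (p t)‖ ^ 2 := by
    rw [← inner_fstGradCLM, ← fstGradient_eq hL₁, real_inner_self_eq_norm_sq]
  have hy : fderiv ℝ L (p t) y = ‖sndGradient L (p t)‖ ^ 2 := by
    rw [← inner_sndGradCLM, ← sndGradient_eq hL₁, real_inner_self_eq_norm_sq]
  rw [show (-fstGradient L (p t), sndGradient L (p t)) = -x + y by simp [x, y]]
  simp only [map_add, map_neg, add_apply, neg_apply, hx, hy, hsymm]
  ring

end Lyapunov

lemma gda_rate_bound {a b r X Y Hx Hy : ℝ} (hX : 0 ≤ X) (hY : 0 ≤ Y) (hx : b * X ≤ Hx)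
    (hy : Hy ≤ a * Y) : Hy - Hx - r * (Y - X) ≤ -min (b - r) (r - a) * (X + Y) := by
  nlinarith [min_le_left (b - r) (r - a), min_le_right (b - r) (r - a)]

/-- If `sup λ_max(L_λλ) < r < inf λ_min(L_mm)` (expressed via uniform quadratic-form
bounds), then along any trajectory of the gradient descent-ascent dynamics the Lyapunov
function `V = ½‖∇_m L‖² + ½‖∇_λ L‖² - r L` is non-increasing, and moreover
`dV/dt ≤ -μ(‖∇_m L‖² + ‖∇_λ L‖²)` for some `μ > 0`. -/
theorem lyapunov_decreasing_under_gap {n k : ℕ}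
    (L : EuclideanSpace ℝ (Fin n) × EuclideanSpace ℝ (Fin k) → ℝ)
    (hL : ContDiff ℝ 2 L) (r a b : ℝ) (hab : a < r) (hrb : r < b)
    (hupper : ∀ m l (v : EuclideanSpace ℝ (Fin k)),
      ⟪v, fderiv ℝ (fun l' => gradient (fun l'' => L (m, l'')) l') l v⟫ ≤ a * ‖v‖ ^ 2)
    (hlower : ∀ m l (v : EuclideanSpace ℝ (Fin n)),
      b * ‖v‖ ^ 2 ≤ ⟪v, fderiv ℝ (fun m' => gradient (fun m'' => L (m'', l)) m') m v⟫)
    (m : ℝ → EuclideanSpace ℝ (Fin n)) (l : ℝ → EuclideanSpace ℝ (Fin k))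
    (hm : ∀ t, HasDerivAt m (-(gradient (fun m' => L (m', l t)) (m t))) t)
    (hl : ∀ t, HasDerivAt l (gradient (fun l' => L (m t, l')) (l t)) t) :
    Antitone (fun s =>
        (1 / 2) * ‖gradient (fun m' => L (m', l s)) (m s)‖ ^ 2
          + (1 / 2) * ‖gradient (fun l' => L (m s, l')) (l s)‖ ^ 2
          - r * L (m s, l s)) ∧
    ∃ μ : ℝ, 0 < μ ∧ ∀ t : ℝ,
      deriv (fun s =>
        (1 / 2) * ‖gradient (fun m' => L (m', l s)) (m s)‖ ^ 2
          + (1 / 2) * ‖gradient (fun l' => L (m s, l')) (l s)‖ ^ 2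
          - r * L (m s, l s)) t
      ≤ -μ * (‖gradient (fun m' => L (m', l t)) (m t)‖ ^ 2
          + ‖gradient (fun l' => L (m t, l')) (l t)‖ ^ 2) := by
  have hV t := hasDerivAt_gdaLyapunov_of_gda hL r ((hm t).prodMk (hl t))
  have hrate : ∀ t, deriv (fun s => gdaLyapunov L r (m s, l s)) t
      ≤ -min (b - r) (r - a)
        * (‖fstGradient L (m t, l t)‖ ^ 2 + ‖sndGradient L (m t, l t)‖ ^ 2) := by
    intro t
    rw [(hV t).deriv]
    refine gda_rate_bound (sq_nonneg _) (sq_nonneg _) ?_ ?_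
    · simpa only [inner_fderiv_gradient_fst hL] using hlower (m t) (l t) _
    · simpa only [inner_fderiv_gradient_snd hL] using hupper (m t) (l t) _
  have hμ : 0 < min (b - r) (r - a) := lt_min (sub_pos.2 hrb) (sub_pos.2 hab)
  refine ⟨antitone_of_deriv_nonpos (fun t => (hV t).differentiableAt) fun t => (hrate t).trans ?_,
    _, hμ, hrate⟩
  exact mul_nonpos_of_nonpos_of_nonneg (neg_nonpos.2 hμ.le) (by positivity)
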